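/- For every recursively enumerable set S of nonempty lists of natural numbers there exists a computable function f : ℕ × ℕ → Option (Finset ℕ) such that for every Y ⊆ ℕ, the closure C(Y) (the smallest element of V(S) containing Y) equals { x : ℕ | ∃ n : ℕ, ∃ F : Finset ℕ, f (x, n) = some F ∧ ↑F ⊆ Y }; in particular, for all X and Y, Y is a presentation of X in V(S) if and only if X ≤ₑ^f Y. -/

import Mathlib

/-- A set `X ⊆ ℕ` satisfies the Horn implications encoded by `S`:
a list `n₀ :: t ∈ S` means `(∀ m ∈ t, m ∈ X) → n₀ ∈ X`. -/
def SatisfiesHorn (S : Set (List ℕ)) (X : Set ℕ) : Prop :=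
  ∀ n₀ : ℕ, ∀ t : List ℕ, (n₀ :: t) ∈ S → (∀ m ∈ t, m ∈ X) → n₀ ∈ X

/-- The quasivariety defined by `S`. -/
def QV (S : Set (List ℕ)) : Set (Set ℕ) := {X | SatisfiesHorn S X}

/-- The closure of `Y`: the smallest element of `QV S` containing `Y`. -/
def QVclosure (S : Set (List ℕ)) (Y : Set ℕ) : Set ℕ :=
  ⋂₀ {X | X ∈ QV S ∧ Y ⊆ X}

/-- `A` is enumeration reducible to `B` via `f`. -/
def EnumRedVia (A B : Set ℕ) (f : ℕ × ℕ → Option (Finset ℕ)) : Prop :=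
  Computable f ∧
    ∀ x : ℕ, x ∈ A ↔ ∃ n : ℕ, ∃ F : Finset ℕ, f (x, n) = some F ∧ ↑F ⊆ B

/-- `A` is enumeration reducible to `B`. -/
def EnumRed (A B : Set ℕ) : Prop := ∃ f : ℕ × ℕ → Option (Finset ℕ), EnumRedVia A B f

/-! An r.e. set of rules is the union of an increasing, primitive recursive chain of finite
rule lists `R k` (run a code of its semi-decision procedure for `k` steps on inputs below `k`).
The closure of `Y` is then the union, over stages `k` and finite `A ⊆ Y`, of `k` rounds of
forward chaining from `A` with the rules `R k`: this union lies in every model containing `Y`,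
and it is itself a model because finitely many derivations can be merged at a common stage.
Coding the pair `(k, A)` by one number, with `A` read through Mathlib's coding of `Finset ℕ`,
makes "`x` is reached from `A` at stage `k`" primitive recursive in `(x, n)`. -/

open Encodable Denumerable Nat.Partrec

theorem REPred.exists_primrec_stages {α : Type*} [Primcodable α] {p : α → Prop}
    (hp : REPred p) :
    ∃ R : ℕ → List α, Primrec R ∧ (∀ {k k'}, k ≤ k' → R k ⊆ R k') ∧
      ∀ a, p a ↔ ∃ k, a ∈ R k := by
  obtain ⟨c, hc⟩ := Code.exists_code.1 hp
  have mem_eval : ∀ e x, x ∈ Code.eval c e → ∃ a, decode e = some a ∧ p a := by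
    intro e x hx
    rw [hc] at hx
    cases h : decode (α := α) e <;> simp_all [Part.assert]
  refine ⟨fun k => (List.range k).filterMap fun e => (Code.evaln k c e).bind fun _ => decode e,
    ?_, ?_, fun a => ?_⟩
  · exact Primrec.listFilterMap Primrec.list_range (Primrec.option_bind
      (Code.primrec_evaln.comp ((Primrec.fst.pair (Primrec.const c)).pair Primrec.snd))
      (Primrec.decode.comp (Primrec.snd.comp Primrec.fst)).to₂)
  · intro k k' hk a ha
    simp only [List.mem_filterMap, List.mem_range, Option.bind_eq_some_iff] at ha ⊢
    obtain ⟨e, he, x, hx, ha⟩ := ha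
    exact ⟨e, he.trans_le hk, x, Code.evaln_mono hk hx, ha⟩
  · simp only [List.mem_filterMap, List.mem_range, Option.bind_eq_some_iff]
    constructor
    · intro ha
      have hdom : encode () ∈ Code.eval c (encode a) := by
        simpa [hc, encodek, Part.assert] using ⟨ha, (), rfl⟩
      obtain ⟨k, hk⟩ := Code.evaln_complete.1 hdom
      exact ⟨k, encode a, Code.evaln_bound hk, _, hk, encodek a⟩
    · rintro ⟨k, e, -, x, hx, ha⟩
      obtain ⟨a', ha', hpa⟩ := mem_eval e x (Code.evaln_sound hx)
      rw [ha] at ha'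
      cases ha'
      exact hpa

section HornStep

variable {α : Type*} [DecidableEq α]

def hornStep (R : List (List α)) (A : List α) : List α :=
  A ++ R.filterMap fun r => if ∀ m ∈ r.tail, m ∈ A then r.head? else none

theorem mem_hornStep {R : List (List α)} {A : List α} {x : α} :
    x ∈ hornStep R A ↔ x ∈ A ∨ ∃ t, x :: t ∈ R ∧ ∀ m ∈ t, m ∈ A := by
  simp only [hornStep, List.mem_append, List.mem_filterMap, Option.ite_none_right_eq_some]
  refine or_congr_right ⟨?_, fun ⟨t, hr, ht⟩ => ⟨x :: t, hr, ht, rfl⟩⟩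
  rintro ⟨_ | ⟨y, t⟩, hr, ht, hx⟩
  · cases hx
  · cases hx
    exact ⟨t, hr, ht⟩

theorem hornStep_subset_hornStep {R R' : List (List α)} {A A' : List α} (hR : R ⊆ R')
    (hA : A ⊆ A') : hornStep R A ⊆ hornStep R' A' := fun x hx => by
  rw [mem_hornStep] at hx ⊢
  exact hx.imp (@hA x) fun ⟨t, hr, ht⟩ => ⟨t, hR hr, fun m hm => hA (ht m hm)⟩

theorem iterate_hornStep_subset {R R' : List (List α)} {A A' : List α} {n n' : ℕ}
    (hR : R ⊆ R') (hA : A ⊆ A') (hn : n ≤ n') :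
    (hornStep R)^[n] A ⊆ (hornStep R')^[n'] A' := by
  induction hn with
  | refl =>
    induction n with
    | zero => exact hA
    | succ n ih =>
      simp only [Function.iterate_succ_apply']
      exact hornStep_subset_hornStep hR ih
  | step _ ih =>
    rw [Function.iterate_succ_apply']
    exact List.Subset.trans ih (List.subset_append_left _ _)

def hornDerive (R : ℕ → List (List α)) (k : ℕ) (A : List α) : List α :=
  (hornStep (R k))^[k] A

def hornDerivable (R : ℕ → List (List α)) (Y : Set α) : Set α :=
  {x | ∃ k A, (∀ m ∈ A, m ∈ Y) ∧ x ∈ hornDerive R k A}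

variable {R : ℕ → List (List α)}

theorem hornDerive_subset_hornDerive (hR : ∀ {k k'}, k ≤ k' → R k ⊆ R k') {k k' : ℕ}
    {A A' : List α} (hk : k ≤ k') (hA : A ⊆ A') : hornDerive R k A ⊆ hornDerive R k' A' :=
  iterate_hornStep_subset (hR hk) hA hk

theorem subset_hornDerivable (Y : Set α) : Y ⊆ hornDerivable R Y :=
  fun x hx => ⟨0, [x], by simpa using hx, List.mem_singleton_self x⟩

theorem exists_hornDerive_of_forall_mem_hornDerivable (hR : ∀ {k k'}, k ≤ k' → R k ⊆ R k')
    {Y : Set α} {t : List α} (ht : ∀ m ∈ t, m ∈ hornDerivable R Y) :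
    ∃ k A, (∀ m ∈ A, m ∈ Y) ∧ t ⊆ hornDerive R k A := by
  induction t with
  | nil => exact ⟨0, [], by simp, List.nil_subset _⟩
  | cons a t ih =>
    obtain ⟨k₁, A₁, hA₁, ha⟩ := ht a List.mem_cons_self
    obtain ⟨k₂, A₂, hA₂, ht'⟩ := ih fun m hm => ht m (List.mem_cons_of_mem a hm)
    refine ⟨max k₁ k₂, A₁ ++ A₂, List.forall_mem_append.2 ⟨hA₁, hA₂⟩, List.cons_subset.2 ⟨?_, ?_⟩⟩
    · exact hornDerive_subset_hornDerive hR (le_max_left _ _) (List.subset_append_left _ _) ha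
    · exact List.Subset.trans ht' <|
        hornDerive_subset_hornDerive hR (le_max_right _ _) (List.subset_append_right _ _)

end HornStep

section Closure

variable {S : Set (List ℕ)} {R : ℕ → List (List ℕ)}

theorem iterate_hornStep_subset_of_satisfiesHorn {X : Set ℕ} (hX : SatisfiesHorn S X)
    {rules : List (List ℕ)} (hrules : ∀ r ∈ rules, r ∈ S) {A : List ℕ} (hA : ∀ m ∈ A, m ∈ X)
    (n : ℕ) : ∀ m ∈ (hornStep rules)^[n] A, m ∈ X := by
  induction n with
  | zero => exact hA
  | succ n ih =>
    intro m hm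
    rw [Function.iterate_succ_apply', mem_hornStep] at hm
    rcases hm with hm | ⟨t, hr, ht⟩
    exacts [ih m hm, hX m t (hrules _ hr) fun m' hm' => ih m' (ht m' hm')]

theorem satisfiesHorn_hornDerivable (hR : ∀ {k k'}, k ≤ k' → R k ⊆ R k')
    (hRS : ∀ l, l ∈ S ↔ ∃ k, l ∈ R k) (Y : Set ℕ) : SatisfiesHorn S (hornDerivable R Y) := by
  intro n₀ t hrule ht
  obtain ⟨k, A, hA, hsub⟩ := exists_hornDerive_of_forall_mem_hornDerivable hR ht
  obtain ⟨k₀, hk₀⟩ := (hRS _).1 hrule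
  refine ⟨max k k₀ + 1, A, hA, ?_⟩
  rw [hornDerive, Function.iterate_succ_apply', mem_hornStep]
  exact Or.inr ⟨t, hR (by omega) hk₀, fun m hm =>
    iterate_hornStep_subset (hR (by omega)) (List.Subset.refl A) (le_max_left k k₀) (hsub hm)⟩

theorem QVclosure_eq_hornDerivable (hR : ∀ {k k'}, k ≤ k' → R k ⊆ R k')
    (hRS : ∀ l, l ∈ S ↔ ∃ k, l ∈ R k) (Y : Set ℕ) : QVclosure S Y = hornDerivable R Y := by
  refine Set.Subset.antisymm (Set.sInter_subset_of_mem (t := hornDerivable R Y)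
    ⟨satisfiesHorn_hornDerivable hR hRS Y, subset_hornDerivable Y⟩) ?_
  rintro x ⟨k, A, hA, hx⟩
  refine Set.mem_sInter.2 ?_
  rintro X ⟨hX, hYX⟩
  exact iterate_hornStep_subset_of_satisfiesHorn hX (fun r hr => (hRS r).2 ⟨k, hr⟩)
    (fun m hm => hYX (hA m hm)) k x hx

end Closure

namespace Primrec

theorem list_mem {α : Type*} [Primcodable α] [DecidableEq α] :
    PrimrecRel fun (a : α) (l : List α) => a ∈ l :=
  (PrimrecRel.exists_mem_list Primrec.eq).swap.of_eq fun a l => by simp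

theorem hornStep {α : Type*} [Primcodable α] [DecidableEq α] :
    Primrec₂ (_root_.hornStep (α := α)) :=
  list_append.comp snd <| listFilterMap fst <| Primrec.ite
    ((PrimrecRel.forall_mem_list list_mem).comp (list_tail.comp snd) (snd.comp fst))
    (list_head?.comp snd) (const none)

theorem hornDerive {α : Type*} [Primcodable α] [DecidableEq α]
    {R : ℕ → List (List α)} (hR : Primrec R) : Primrec₂ (_root_.hornDerive R) :=
  nat_iterate fst snd (hornStep.comp (hR.comp (fst.comp fst)) snd)

theorem raise' : Primrec₂ Denumerable.raise' := by
  have foldl_eq (l : List ℕ) (n : ℕ) (acc : List ℕ) :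
      (l.foldl (fun s m => (s.1 ++ [m + s.2], m + s.2 + 1)) (acc, n)).1 =
        acc ++ Denumerable.raise' l n := by
    induction l generalizing acc n with
    | nil => simp [Denumerable.raise']
    | cons m l ih => simp [Denumerable.raise', ih]
  have hstep : Primrec₂ fun (_ : List ℕ × ℕ) (q : (List ℕ × ℕ) × ℕ) =>
      (q.1.1 ++ [q.2 + q.1.2], q.2 + q.1.2 + 1) :=
    (pair (list_concat.comp (fst.comp (fst.comp snd))
        (nat_add.comp (snd.comp snd) (snd.comp (fst.comp snd))))
      (succ.comp (nat_add.comp (snd.comp snd) (snd.comp (fst.comp snd))))).to₂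
  exact (fst.comp (list_foldl fst ((const []).pair snd) hstep)).to₂.of_eq fun l n => by
    simpa using foldl_eq l n []

end Primrec

theorem mem_ofNat_finset_iff {m j : ℕ} :
    m ∈ ofNat (Finset ℕ) j ↔ m ∈ raise' (ofNat (List ℕ) j) 0 := by
  change m ∈ Finset.map (eqv ℕ).symm.toEmbedding (raise'Finset (ofNat (List ℕ) j) 0) ↔ _
  simp [raise'Finset, eqv, Finset.mem_def]

def closureOperator (R : ℕ → List (List ℕ)) (p : ℕ × ℕ) : Option (Finset ℕ) :=
  if p.1 ∈ hornDerive R p.2.unpair.1 (raise' (ofNat (List ℕ) p.2.unpair.2) 0) then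
    some (ofNat (Finset ℕ) p.2.unpair.2)
  else none

theorem Primrec.closureOperator {R : ℕ → List (List ℕ)} (hR : Primrec R) :
    Primrec (closureOperator R) :=
  ite (list_mem.comp fst ((Primrec.hornDerive hR).comp (fst.comp (unpair.comp snd))
      (Primrec.raise'.comp ((Primrec.ofNat (List ℕ)).comp (snd.comp (unpair.comp snd))) (const 0))))
    (option_some.comp ((Primrec.ofNat (Finset ℕ)).comp (snd.comp (unpair.comp snd)))) (const none)

theorem setOf_closureOperator_eq_hornDerivable {R : ℕ → List (List ℕ)} (Y : Set ℕ) :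
    {x | ∃ n F, closureOperator R (x, n) = some F ∧ ↑F ⊆ Y} = hornDerivable R Y := by
  ext x
  constructor
  · rintro ⟨n, F, hF, hFY⟩
    rw [closureOperator] at hF
    split_ifs at hF with hx
    cases hF
    exact ⟨_, _, fun m hm => hFY (mem_ofNat_finset_iff.2 hm), hx⟩
  · rintro ⟨k, A, hA, hx⟩
    obtain ⟨j, hj⟩ : ∃ j, ofNat (Finset ℕ) j = A.toFinset := ⟨_, ofNat_encode _⟩
    have hmem : ∀ m, m ∈ ofNat (Finset ℕ) j ↔ m ∈ A := by simp [hj]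
    refine ⟨Nat.pair k j, ofNat (Finset ℕ) j, ?_, fun m hm => hA m ((hmem m).1 hm)⟩
    rw [closureOperator, Nat.unpair_pair, if_pos]
    exact iterate_hornStep_subset (List.Subset.refl _)
      (fun m hm => mem_ofNat_finset_iff.1 ((hmem m).2 hm)) le_rfl hx

theorem closure_is_enumeration_operator_general (S : Set (List ℕ))
    (hS : REPred (· ∈ S)) :
    ∃ f : ℕ × ℕ → Option (Finset ℕ), Computable f ∧
      (∀ Y : Set ℕ, QVclosure S Y =
        {x : ℕ | ∃ n : ℕ, ∃ F : Finset ℕ, f (x, n) = some F ∧ ↑F ⊆ Y}) ∧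
      (∀ X ∈ QV S, ∀ Y : Set ℕ, QVclosure S Y = X ↔ EnumRedVia X Y f) := by
  obtain ⟨R, hR, hR_mono, hRS⟩ := hS.exists_primrec_stages
  have hclosure : ∀ Y : Set ℕ, QVclosure S Y =
      {x : ℕ | ∃ n : ℕ, ∃ F : Finset ℕ, closureOperator R (x, n) = some F ∧ ↑F ⊆ Y} :=
    fun Y => (QVclosure_eq_hornDerivable hR_mono hRS Y).trans
      (setOf_closureOperator_eq_hornDerivable Y).symm
  have hcomp : Computable (closureOperator R) := (Primrec.closureOperator hR).to_comp
  refine ⟨closureOperator R, hcomp, hclosure, fun X _ Y => ?_⟩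
  rw [hclosure, EnumRedVia, Set.ext_iff]
  exact ⟨fun h => ⟨hcomp, fun x => (h x).symm⟩, fun h x => (h.2 x).symm⟩

/-- For any r.e. quasivariety there is a single computable enumeration operator
`f` computing the closure map; in particular `Y` presents `X` iff `X ≤ₑ^f Y`. -/
theorem closure_is_enumeration_operator (S : Set (List ℕ))
    (hne : ∀ l ∈ S, l ≠ []) (hS : REPred (· ∈ S)) :
    ∃ f : ℕ × ℕ → Option (Finset ℕ), Computable f ∧
      (∀ Y : Set ℕ, QVclosure S Y =
        {x : ℕ | ∃ n : ℕ, ∃ F : Finset ℕ, f (x, n) = some F ∧ ↑F ⊆ Y}) ∧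
      (∀ X ∈ QV S, ∀ Y : Set ℕ, QVclosure S Y = X ↔ EnumRedVia X Y f) :=
  closure_is_enumeration_operator_general S hS
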